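/- Closed form of the S4D gradient with respect to the sampling-interval parameter (from the proof of Theorem 5.1): Let d = 1, A ∈ ℝ^{n×n} diagonal and invertible, B ∈ ℝ^{n×1}, C ∈ ℝ^{1×n}, b ∈ ℝ, and write Ā = exp(exp(b) A). Then for every input u ∈ ℝ^L, the derivative of the final S4D output with respect to b equals ∂Γ_S4D(u)_L/∂b = C Σ_{j=1}^L Ā^{L−j} u_j exp(b) (Ā + (L−j)(Ā − I)) B. -/

import Mathlib

/-!
With `Δ = exp b` and `Ā = exp (Δ A)`, the recursion unrolls to the convolution
`y_L = Σ_j u_j C Ā^(L-1-j) A⁻¹ (Ā - 1) B`. Since `A⁻¹` commutes with `Ā`, each kernel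
`Ā^m A⁻¹ (Ā - 1) = A⁻¹ (exp ((m+1) Δ A) - exp (m Δ A))` is a difference of exponentials, whose
`Δ`-derivative `(m+1) Ā^(m+1) - m Ā^m = Ā^m (Ā + m (Ā - 1))` no longer involves `A⁻¹`;
the chain rule through `Δ = exp b` contributes the factor `exp b`.
-/

open Matrix Filter Asymptotics MeasureTheory Real Topology

noncomputable section

/-- Matrix exponential over the reals. -/
def mexp {n : ℕ} (A : Matrix (Fin n) (Fin n) ℝ) : Matrix (Fin n) (Fin n) ℝ :=
  NormedSpace.exp A

/-- The softplus function `z ↦ log (1 + e^z)`. -/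
def softplus (z : ℝ) : ℝ := Real.log (1 + Real.exp z)

/-- Time-varying linear state recursion: `x 0 = 0`,
`x (k+1) = Abar k *ᵥ x k + u k • Bbar k`.  (Index `k : ℕ` is the 0-based
position of the input, so `x (k+1)` is the state `x_{k+1}` after seeing
inputs `u_1 = u 0, …, u_{k+1} = u k`.) -/
def tvState {n : ℕ} (Abar : ℕ → Matrix (Fin n) (Fin n) ℝ) (Bbar : ℕ → Fin n → ℝ)
    (u : ℕ → ℝ) : ℕ → Fin n → ℝ
  | 0 => 0
  | k + 1 => (Abar k) *ᵥ (tvState Abar Bbar u k) + u k • Bbar k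

/-- Zero-padded extension of a finite scalar sequence `(u_1, …, u_L)`
(`u 0` is `u_1`, …, `u ⟨L-1⟩` is `u_L`). -/
def seq {L : ℕ} (u : Fin L → ℝ) : ℕ → ℝ := fun k => if h : k < L then u ⟨k, h⟩ else 0

/-- Zero-padded extension of a finite vector-valued sequence. -/
def seqd {L d : ℕ} (u : Fin L → Fin d → ℝ) : ℕ → Fin d → ℝ :=
  fun k => if h : k < L then u ⟨k, h⟩ else 0

/-- Final output `Γ_S4D(u)_L` of a single-channel (`d = 1`) S4D unit:
`Ā = exp(exp(b) A)`, `B̄ = A⁻¹(Ā − I)B`, `x_k = Ā x_{k-1} + B̄ u_k`, `x_0 = 0`,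
`y_k = C x_k`. -/
def s4dScalar {n : ℕ} (A : Matrix (Fin n) (Fin n) ℝ) (B C : Fin n → ℝ) (b : ℝ)
    (L : ℕ) (u : ℕ → ℝ) : ℝ :=
  C ⬝ᵥ tvState (fun _ => mexp (Real.exp b • A))
      (fun _ => A⁻¹ *ᵥ ((mexp (Real.exp b • A) - 1) *ᵥ B)) u L

/-- Final output `Γ_S6(u)_L` of a single-channel (`d = 1`) S6 unit:
`Δ_k = softplus(w u_k + b)`, `Ā_k = exp(Δ_k A)`, `B̄_k = A⁻¹(Ā_k − I)B u_k`,
`x_k = Ā_k x_{k-1} + B̄_k u_k`, `x_0 = 0`, `y_k = (u_k C) x_k`. -/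
def s6Scalar {n : ℕ} (A : Matrix (Fin n) (Fin n) ℝ) (B C : Fin n → ℝ) (w b : ℝ)
    (L : ℕ) (u : ℕ → ℝ) : ℝ :=
  u (L - 1) *
    (C ⬝ᵥ tvState (fun k => mexp (softplus (w * u k + b) • A))
        (fun k => u k • (A⁻¹ *ᵥ ((mexp (softplus (w * u k + b) • A) - 1) *ᵥ B))) u L)

section BanachAlgebra

open NormedSpace

variable {𝕂 𝔸 : Type*} [RCLike 𝕂] [NormedRing 𝔸] [NormedAlgebra 𝕂 𝔸] [CompleteSpace 𝔸]

theorem exp_natCast_mul_smul (a : 𝔸) (t : 𝕂) (k : ℕ) :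
    exp (((k : 𝕂) * t) • a) = exp (t • a) ^ k := by
  let +nondep : NormedAlgebra ℚ 𝔸 := .restrictScalars ℚ 𝕂 𝔸
  rw [mul_smul, Nat.cast_smul_eq_nsmul, NormedSpace.exp_nsmul]

theorem hasDerivAt_exp_mul_smul (a : 𝔸) (c t : 𝕂) :
    HasDerivAt (fun s : 𝕂 => exp ((c * s) • a)) (c • (exp ((c * t) • a) * a)) t := by
  have h := (hasDerivAt_exp_smul_const a (c * t)).scomp t ((hasDerivAt_id' t).const_mul c)
  rwa [mul_one] at h

theorem exp_smul_pow_mul_inv_mul_sub_one {a a' : 𝔸} (hcomm : Commute a' a) (t : 𝕂) (m : ℕ) :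
    exp (t • a) ^ m * (a' * (exp (t • a) - 1))
      = a' * (exp ((((m + 1 : ℕ) : 𝕂) * t) • a) - exp (((m : 𝕂) * t) • a)) := by
  have hpow : Commute a' (exp (t • a) ^ m) := (hcomm.smul_right t).exp_right.pow_right m
  rw [exp_natCast_mul_smul, exp_natCast_mul_smul, pow_succ, ← hpow.left_comm, mul_sub, mul_one]

theorem hasDerivAt_exp_smul_pow_mul_inv_mul_sub_one {a a' : 𝔸} (ha : a' * a = 1)
    (hcomm : Commute a' a) (m : ℕ) (t : 𝕂) :
    HasDerivAt (fun s : 𝕂 => exp (s • a) ^ m * (a' * (exp (s • a) - 1)))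
      (exp (t • a) ^ m * (exp (t • a) + (m : 𝕂) • (exp (t • a) - 1))) t := by
  have hEa : Commute (exp (t • a)) a := ((Commute.refl a).smul_left t).exp_left
  have hcancel (x : 𝔸) (hx : Commute x a) : a' * (x * a) = x := by
    rw [hx.eq, ← mul_assoc, ha, one_mul]
  simp_rw [exp_smul_pow_mul_inv_mul_sub_one hcomm]
  convert ((hasDerivAt_exp_mul_smul a ((m + 1 : ℕ) : 𝕂) t).fun_sub
    (hasDerivAt_exp_mul_smul a (m : 𝕂) t)).const_mul a' using 1
  rw [exp_natCast_mul_smul, exp_natCast_mul_smul, ← smul_mul_assoc, ← smul_mul_assoc, ← sub_mul,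
    hcancel _ (((hEa.pow_left _).smul_left _).sub_left ((hEa.pow_left _).smul_left _))]
  simp only [pow_succ, Nat.cast_succ, add_smul, one_smul, smul_sub, mul_add, mul_sub,
    mul_smul_comm, mul_one]
  abel

end BanachAlgebra

theorem tvState_const_eq_sum {n : ℕ} (P : Matrix (Fin n) (Fin n) ℝ) (Q : Fin n → ℝ)
    (u : ℕ → ℝ) :
    ∀ k, tvState (fun _ => P) (fun _ => Q) u k = ∑ j : Fin k, u j • (P ^ (k - 1 - (j : ℕ)) *ᵥ Q)
  | 0 => by simp [tvState]
  | k + 1 => by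
    rw [tvState, tvState_const_eq_sum P Q u k, Fin.sum_univ_castSucc, mulVec_sum]
    congr 1
    · refine Finset.sum_congr rfl fun j _ => ?_
      have hj : k - 1 - (j : ℕ) + 1 = k - (j : ℕ) := by omega
      rw [mulVec_smul, mulVec_mulVec, ← pow_succ', hj]
      rfl
    · simp

/-- In the paper's notation, `Ā ^ m B̄ = s4dKernel A m b *ᵥ B`. -/
def s4dKernel {n : ℕ} (A : Matrix (Fin n) (Fin n) ℝ) (m : ℕ) (b : ℝ) :
    Matrix (Fin n) (Fin n) ℝ :=
  mexp (Real.exp b • A) ^ m * (A⁻¹ * (mexp (Real.exp b • A) - 1))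

theorem s4dScalar_eq_sum {n L : ℕ} (A : Matrix (Fin n) (Fin n) ℝ) (B C : Fin n → ℝ) (b : ℝ)
    (u : Fin L → ℝ) :
    s4dScalar A B C b L (seq u) = ∑ j : Fin L, u j * (C ⬝ᵥ (s4dKernel A (L - 1 - j) b *ᵥ B)) := by
  simp only [s4dScalar, s4dKernel, tvState_const_eq_sum, dotProduct_sum, dotProduct_smul,
    _root_.seq, Fin.is_lt, dite_true, mulVec_mulVec, smul_eq_mul]

section LinftyOp

-- Any norm would do: only the topology of the matrices enters the derivatives below.
attribute [local instance] Matrix.linftyOpNormedAddCommGroup Matrix.linftyOpNormedSpace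
  Matrix.linftyOpNormedRing Matrix.linftyOpNormedAlgebra

theorem HasDerivAt.dotProduct_mulVec {m n : Type*} [Fintype m] [Fintype n]
    {F : ℝ → Matrix m n ℝ} {F' : Matrix m n ℝ} {t : ℝ} (hF : HasDerivAt F F' t)
    (B : n → ℝ) (C : m → ℝ) :
    HasDerivAt (fun s => C ⬝ᵥ (F s *ᵥ B)) (C ⬝ᵥ (F' *ᵥ B)) t := by
  let ℓ : Matrix m n ℝ →ₗ[ℝ] ℝ :=
    { toFun := fun M => C ⬝ᵥ (M *ᵥ B)
      map_add' := fun M N => by simp [add_mulVec, dotProduct_add]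
      map_smul' := fun c M => by simp [smul_mulVec, dotProduct_smul] }
  exact (LinearMap.toContinuousLinearMap ℓ).hasFDerivAt.comp_hasDerivAt (f := F) (f' := F') t hF

theorem hasDerivAt_s4dKernel {n : ℕ} {A : Matrix (Fin n) (Fin n) ℝ} (hA : IsUnit A.det)
    (m : ℕ) (b : ℝ) :
    HasDerivAt (s4dKernel A m) (Real.exp b • (mexp (Real.exp b • A) ^ m *
      (mexp (Real.exp b • A) + (m : ℝ) • (mexp (Real.exp b • A) - 1)))) b := by
  have hcomm : Commute A⁻¹ A := by
    rw [Commute, SemiconjBy, nonsing_inv_mul A hA, mul_nonsing_inv A hA]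
  exact (hasDerivAt_exp_smul_pow_mul_inv_mul_sub_one (nonsing_inv_mul A hA) hcomm m
    (Real.exp b)).scomp b (Real.hasDerivAt_exp b)

end LinftyOp

theorem s4d_gradient_closed_form_general
    (n L : ℕ)
    (A : Matrix (Fin n) (Fin n) ℝ)
    (hA : IsUnit A.det)
    (B C : Fin n → ℝ) (b : ℝ) (u : Fin L → ℝ) :
    deriv (fun b' => s4dScalar A B C b' L (seq u)) b =
      C ⬝ᵥ ∑ j : Fin L,
        (u j * Real.exp b) •
          (((mexp (Real.exp b • A)) ^ (L - 1 - (j : ℕ))) *ᵥ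
            ((mexp (Real.exp b • A) +
                ((L - 1 - (j : ℕ) : ℕ) : ℝ) • (mexp (Real.exp b • A) - 1)) *ᵥ B)) := by
  have hderiv := HasDerivAt.fun_sum (u := Finset.univ) fun (j : Fin L) _ =>
    ((hasDerivAt_s4dKernel hA (L - 1 - j) b).dotProduct_mulVec B C).const_mul (u j)
  rw [funext (s4dScalar_eq_sum A B C · u), hderiv.deriv, dotProduct_sum]
  refine Finset.sum_congr rfl fun j _ => ?_
  rw [smul_mulVec, dotProduct_smul, dotProduct_smul, mulVec_mulVec, smul_eq_mul, smul_eq_mul,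
    mul_assoc]

/-- **Closed form of the S4D gradient with respect to the sampling-interval
parameter** (from the proof of Theorem 5.1).  With `Ā = exp(exp(b) A)`,
`∂Γ_S4D(u)_L/∂b = C Σ_{j=1}^L Ā^{L−j} u_j exp(b) (Ā + (L−j)(Ā − I)) B`. -/
theorem s4d_gradient_closed_form
    (n L : ℕ) (hn : 1 ≤ n) (hL : 1 ≤ L)
    (A : Matrix (Fin n) (Fin n) ℝ)
    (hAdiag : ∀ i j : Fin n, i ≠ j → A i j = 0) (hA : IsUnit A.det)
    (B C : Fin n → ℝ) (b : ℝ) (u : Fin L → ℝ) :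
    deriv (fun b' => s4dScalar A B C b' L (seq u)) b =
      C ⬝ᵥ ∑ j : Fin L,
        (u j * Real.exp b) •
          (((mexp (Real.exp b • A)) ^ (L - 1 - (j : ℕ))) *ᵥ
            ((mexp (Real.exp b • A) +
                ((L - 1 - (j : ℕ) : ℕ) : ℝ) • (mexp (Real.exp b • A) - 1)) *ᵥ B)) :=
  s4d_gradient_closed_form_general n L A hA B C b u
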